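/- If F is a uniformly continuous normalized POVM with spectrum σ(F), and F has the norm-1 property, then ‖F({x})‖ ≠ 0 for every x ∈ σ(F). -/
import Mathlib


open MeasureTheory Filter Topology

local notation "⟪" x ", " y "⟫" => @inner ℂ _ _ x y

variable {X : Type*} [TopologicalSpace X] [MeasurableSpace X] [BorelSpace X]
variable {H : Type*} [NormedAddCommGroup H] [InnerProductSpace ℂ H] [CompleteSpace H]

/-- A normalized POVM: self-adjoint positive values, countably additive in the
weak operator topology, and `F univ = 1`. -/
def IsPOVM (F : Set X → H →L[ℂ] H) : Prop :=
  (∀ Δ, MeasurableSet Δ → IsSelfAdjoint (F Δ)) ∧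
  (∀ Δ, MeasurableSet Δ → ∀ x : H, 0 ≤ (⟪x, F Δ x⟫).re) ∧
  (∀ Δ : ℕ → Set X, (∀ i, MeasurableSet (Δ i)) → Pairwise (Function.onFun Disjoint Δ) →
    ∀ x : H, Tendsto (fun n => ∑ i ∈ Finset.range n, ⟪x, F (Δ i) x⟫)
      atTop (𝓝 ⟪x, F (⋃ i, Δ i) x⟫)) ∧
  F Set.univ = 1

/-- `F` is uniformly continuous at `Δ`: for every countable disjoint decomposition of `Δ`,
the partial sums converge to `F Δ` in the operator norm topology. -/
def UnifContAt (F : Set X → H →L[ℂ] H) (Δ : Set X) : Prop :=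
  ∀ Δi : ℕ → Set X, (∀ i, MeasurableSet (Δi i)) → Pairwise (Function.onFun Disjoint Δi) →
    (⋃ i, Δi i) = Δ →
    Tendsto (fun n => ∑ i ∈ Finset.range n, F (Δi i)) atTop (𝓝 (F Δ))

/-- A continuous linear map with vanishing quadratic form is zero. -/
lemma clm_eq_zero_of_inner (T : H →L[ℂ] H) (h : ∀ v : H, ⟪v, T v⟫ = 0) : T = 0 := by
  have h' : (T : H →ₗ[ℂ] H) = 0 := by
    rw [← inner_map_self_eq_zero]
    intro v
    simpa [inner_eq_zero_symm] using h v
  exact ContinuousLinearMap.coe_injective (by simpa using h')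

lemma povm_empty (F : Set X → H →L[ℂ] H) (hF : IsPOVM F) : F ∅ = 0 := by
  apply clm_eq_zero_of_inner
  intro v
  have h := hF.2.2.1 (fun _ => (∅ : Set X)) (fun _ => MeasurableSet.empty)
    (fun i j _ => disjoint_bot_left) v
  simp only [Set.iUnion_empty] at h
  have h2 : Tendsto (fun n => ∑ i ∈ Finset.range (n + 1), ⟪v, F (∅ : Set X) v⟫)
      atTop (𝓝 ⟪v, F (∅ : Set X) v⟫) := h.comp (tendsto_add_atTop_nat 1)
  have h3 : Tendsto (fun n => (∑ i ∈ Finset.range (n + 1), ⟪v, F (∅ : Set X) v⟫)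
      - ∑ i ∈ Finset.range n, ⟪v, F (∅ : Set X) v⟫) atTop (𝓝 0) := by
    simpa using h2.sub h
  have h4 : Tendsto (fun _ : ℕ => ⟪v, F (∅ : Set X) v⟫) atTop (𝓝 0) := by
    refine h3.congr fun n => ?_
    rw [Finset.sum_range_succ, add_sub_cancel_left]
  exact (tendsto_nhds_unique tendsto_const_nhds h4)

lemma povm_add (F : Set X → H →L[ℂ] H) (hF : IsPOVM F) {A B : Set X}
    (hA : MeasurableSet A) (hB : MeasurableSet B) (hd : Disjoint A B) :
    F (A ∪ B) = F A + F B := by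
  have h0 := povm_empty F hF
  set Δ : ℕ → Set X := fun i => match i with
    | 0 => A
    | 1 => B
    | _ + 2 => ∅ with hΔ
  have hmeas : ∀ i, MeasurableSet (Δ i) := by
    intro i
    match i with
    | 0 => exact hA
    | 1 => exact hB
    | k + 2 => exact MeasurableSet.empty
  have hpd : Pairwise (Function.onFun Disjoint Δ) := by
    intro i j hij
    unfold Function.onFun
    match i, j, hij with
    | 0, 1, _ => exact hd
    | 0, k + 2, _ => exact disjoint_bot_right
    | 1, 0, _ => exact hd.symm
    | 1, k + 2, _ => exact disjoint_bot_right
    | k + 2, 0, _ => exact disjoint_bot_left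
    | k + 2, 1, _ => exact disjoint_bot_left
    | k + 2, m + 2, h => exact disjoint_bot_left
  have hU : (⋃ i, Δ i) = A ∪ B := by
    apply Set.Subset.antisymm
    · refine Set.iUnion_subset fun i => ?_
      match i with
      | 0 => exact Set.subset_union_left
      | 1 => exact Set.subset_union_right
      | k + 2 => exact Set.empty_subset _
    · intro y hy
      rcases hy with hy | hy
      · exact Set.mem_iUnion.2 ⟨0, hy⟩
      · exact Set.mem_iUnion.2 ⟨1, hy⟩
  have hz : F (A ∪ B) - (F A + F B) = 0 := by
    apply clm_eq_zero_of_inner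
    intro v
    have h := hF.2.2.1 Δ hmeas hpd v
    rw [hU] at h
    have hsum : ∀ n, 2 ≤ n →
        ∑ i ∈ Finset.range n, ⟪v, F (Δ i) v⟫ = ⟪v, F A v⟫ + ⟪v, F B v⟫ := by
      intro n hn
      induction n with
      | zero => omega
      | succ m ih =>
        rcases Nat.lt_or_ge m 2 with hm | hm
        · have hm1 : m = 1 := by omega
          subst hm1
          rw [Finset.sum_range_succ, Finset.sum_range_one]
        · obtain ⟨k, rfl⟩ : ∃ k, m = k + 2 := ⟨m - 2, by omega⟩
          rw [Finset.sum_range_succ, ih hm]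
          have he : Δ (k + 2) = ∅ := rfl
          rw [he, h0]
          simp
    have hconst : Tendsto (fun _ : ℕ => ⟪v, F A v⟫ + ⟪v, F B v⟫) atTop
        (𝓝 ⟪v, F (A ∪ B) v⟫) := by
      apply h.congr'
      filter_upwards [eventually_ge_atTop 2] with n hn
      exact hsum n hn
    have heq := tendsto_nhds_unique hconst tendsto_const_nhds
    simp only [ContinuousLinearMap.sub_apply, ContinuousLinearMap.add_apply, inner_sub_right,
      inner_add_right]
    rw [← heq]
    ring
  exact sub_eq_zero.mp hz

/-- a uniformly continuous POVM with the norm-1 property satisfies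
`‖F {x}‖ ≠ 0` for every `x` in its spectrum. -/
theorem norm_singleton_ne_zero_of_unifCont_norm_one [TopologicalSpace.MetrizableSpace X]
    (F : Set X → H →L[ℂ] H) (hF : IsPOVM F)
    (hunif : ∀ Δ : Set X, MeasurableSet Δ → UnifContAt F Δ)
    (hnorm1 : ∀ Δ : Set X, MeasurableSet Δ → F Δ ≠ 0 → ‖F Δ‖ = 1) :
    ∀ x : X, (∀ Δ : Set X, IsOpen Δ → x ∈ Δ → F Δ ≠ 0) → ‖F {x}‖ ≠ 0 := by
  intro x hx h0
  letI : MetricSpace X := TopologicalSpace.metrizableSpaceMetric X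
  have hFx : F {x} = 0 := by rwa [norm_eq_zero] at h0
  set B : ℕ → Set X := fun n => Metric.ball x (1 / (n + 1)) with hB
  have hBopen : ∀ n, IsOpen (B n) := fun n => Metric.isOpen_ball
  have hBmeas : ∀ n, MeasurableSet (B n) := fun n => (hBopen n).measurableSet
  have hxB : ∀ n, x ∈ B n := fun n => Metric.mem_ball_self (by positivity)
  have hBmono : ∀ m n : ℕ, m ≤ n → B n ⊆ B m := by
    intro m n hmn
    apply Metric.ball_subset_ball
    apply one_div_le_one_div_of_le (by positivity)
    exact_mod_cast by omega
  have hBnorm : ∀ n, ‖F (B n)‖ = 1 := fun n =>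
    hnorm1 (B n) (hBmeas n) (hx (B n) (hBopen n) (hxB n))
  -- decomposition of B 0
  set Δi : ℕ → Set X := fun n => match n with
    | 0 => {x}
    | k + 1 => B k \ B (k + 1) with hΔi
  have hmeas : ∀ i, MeasurableSet (Δi i) := by
    intro i
    match i with
    | 0 => exact measurableSet_singleton x
    | k + 1 => exact (hBmeas k).diff (hBmeas (k + 1))
  have hdiff_sub : ∀ k, Δi (k + 1) ⊆ B k := fun k => Set.diff_subset
  have hpd : Pairwise (Function.onFun Disjoint Δi) := by
    have key : ∀ i j : ℕ, i < j → Disjoint (Δi i) (Δi j) := by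
      intro i j hij
      rw [Set.disjoint_left]
      intro y hyi hyj
      match i, j, hij with
      | 0, k + 1, _ =>
        have : y = x := hyi
        exact hyj.2 (this ▸ hxB (k + 1))
      | m + 1, k + 1, h =>
        have hmk : m + 1 ≤ k := by omega
        exact hyi.2 (hBmono (m + 1) k hmk hyj.1)
    intro i j hij
    rcases Nat.lt_or_ge i j with h | h
    · exact key i j h
    · exact (key j i (by omega)).symm
  have hU : (⋃ i, Δi i) = B 0 := by
    apply Set.Subset.antisymm
    · refine Set.iUnion_subset fun i => ?_
      match i with
      | 0 => exact Set.singleton_subset_iff.2 (hxB 0)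
      | k + 1 => exact (hdiff_sub k).trans (hBmono 0 k (Nat.zero_le k))
    · intro y hy
      by_cases hyx : y = x
      · exact Set.mem_iUnion.2 ⟨0, hyx⟩
      · have hd : 0 < dist y x := dist_pos.2 hyx
        obtain ⟨n, hn⟩ := exists_nat_one_div_lt hd
        have hP : ∃ m, y ∉ B m := ⟨n, fun hmem => absurd hmem (by
          simp only [hB, Metric.mem_ball]
          push_neg
          exact_mod_cast hn.le)⟩
        classical
        set m := Nat.find hP with hm
        have hym : y ∉ B m := Nat.find_spec hP
        have hm0 : m ≠ 0 := fun h => hym (h ▸ hy)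
        obtain ⟨k, hk⟩ := Nat.exists_eq_succ_of_ne_zero hm0
        have hyk : y ∈ B k := by
          by_contra hyk
          have hle : m ≤ k := Nat.find_le hyk
          omega
        rw [hk] at hym
        exact Set.mem_iUnion.2 ⟨k + 1, ⟨hyk, hym⟩⟩
  -- telescoping
  have htel : ∀ n, ∑ i ∈ Finset.range (n + 1), F (Δi i) = F (B 0) - F (B n) := by
    intro n
    induction n with
    | zero =>
      rw [Finset.sum_range_one]
      show F {x} = F (B 0) - F (B 0)
      rw [hFx]
      simp
    | succ k ih =>
      rw [Finset.sum_range_succ, ih]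
      have hsplit : F (B k) = F (B (k + 1)) + F (B k \ B (k + 1)) := by
        have hu : B (k + 1) ∪ (B k \ B (k + 1)) = B k :=
          Set.union_diff_cancel' (le_refl _) (hBmono k (k + 1) (by omega))
        have hs := povm_add F hF (hBmeas (k + 1)) ((hBmeas k).diff (hBmeas (k + 1)))
          Set.disjoint_sdiff_right
        rw [hu] at hs
        exact hs
      have : F (Δi (k + 1)) = F (B k \ B (k + 1)) := rfl
      rw [this]
      have : F (B k \ B (k + 1)) = F (B k) - F (B (k + 1)) := by
        rw [hsplit]; abel
      rw [this]
      abel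
  have hconv := hunif (B 0) (hBmeas 0) Δi hmeas hpd hU
  have hconv' : Tendsto (fun n => F (B 0) - F (B n)) atTop (𝓝 (F (B 0))) := by
    have := hconv.comp (tendsto_add_atTop_nat 1)
    refine this.congr fun n => ?_
    exact htel n
  have hzero : Tendsto (fun n => F (B n)) atTop (𝓝 0) := by
    have h' : Tendsto (fun n => F (B 0) - (F (B 0) - F (B n))) atTop
        (𝓝 (F (B 0) - F (B 0))) := tendsto_const_nhds.sub hconv'
    simpa using h'
  have hnorm0 : Tendsto (fun n => ‖F (B n)‖) atTop (𝓝 0) := by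
    simpa using hzero.norm
  have : Tendsto (fun _ : ℕ => (1 : ℝ)) atTop (𝓝 0) := hnorm0.congr fun n => hBnorm n
  exact one_ne_zero (tendsto_nhds_unique tendsto_const_nhds this)
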